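/- Suppose C₀ > 0 and Q₀ ∈ ℤ_+ are such that for every integer q ≥ Q₀ and every b ∈ ℤ_+ with b < q and gcd(b, q) = 1, there exist rationals b'/q' and b''/q'' (in lowest terms, q', q'' positive integers) with b/q = b'/q' + b''/q'', Ĉ(b'/q') ≤ C₀ · log q, and q'' < √q. Then there exists a constant C > 0 such that Ĉ(b/q) ≤ C · log q for every rational b/q ∈ (0,1) with gcd(b, q) = 1 and q ≥ 2. -/

import Mathlib

/-- Auxiliary continued fraction algorithm with fuel: for `x ∈ (0,1)`,
produces the list of partial quotients `[a₁, …, aₙ]` of `x = [0; a₁, …, aₙ]`. -/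
def cfListAux : ℕ → ℚ → List ℕ
  | 0, _ => []
  | (n + 1), x => if x = 0 then [] else ⌊x⁻¹⌋.toNat :: cfListAux n (x⁻¹ - (⌊x⁻¹⌋ : ℚ))

/-- The (canonical) list of partial quotients of a rational `x ∈ (0,1)`:
`x = [0; a₁, …, aₙ]` with each `aᵢ` a positive integer and `aₙ ≥ 2`.
The denominator of `x` is a valid fuel bound since denominators strictly decrease. -/
def cfList (x : ℚ) : List ℕ := cfListAux x.den x

/-- `S x` is the sum of the partial quotients of the rational `x ∈ (0,1)`. -/
def S (x : ℚ) : ℕ := (cfList x).sum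

/-- `RA A` is the set of rationals in `(0,1)` all of whose partial quotients are `≤ A`. -/
def RA (A : ℕ) : Set ℚ := {x | 0 < x ∧ x < 1 ∧ ∀ a ∈ cfList x, a ≤ A}

/-- `RepCost y n` : the rational `y` admits a representation as a finite signed sum
`y = Σ_α ε_α · x_α` with `ε_α ∈ {+1, -1}`, each `x_α = b_α/q_α ∈ (0,1)` in lowest terms,
and total partial-quotient cost `Σ_α S(x_α) = n`. -/
def RepCost (y : ℚ) (n : ℕ) : Prop :=
  ∃ (k : ℕ) (ε : Fin k → ℤ) (x : Fin k → ℚ),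
    (∀ i, ε i = 1 ∨ ε i = -1) ∧ (∀ i, 0 < x i ∧ x i < 1) ∧
    y = ∑ i, (ε i : ℚ) * x i ∧ n = ∑ i, S (x i)

/-- `CostLE y t` : the minimal representation cost `Ĉ(y)` is at most `t`. -/
def CostLE (y : ℚ) (t : ℝ) : Prop := ∃ n : ℕ, RepCost y n ∧ (n : ℝ) ≤ t

/-!
Induct on the denominator `q` of `z ∈ [0, 1)`. Small denominators are handled directly, since the
partial quotients of `b / q` sum to at most `q`. Otherwise split `z = x + y` and `y = ⌊y⌋ + fract y`.
The integer `⌊y⌋` is a signed sum of `2 |⌊y⌋|` halves, and `|⌊y⌋| ≤ |z| + |x| + 1` is bounded by the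
cost of `x`; the fractional part has denominator `< √q`, so by induction it costs at most
`C log √q = (C / 2) log q`. Halving the logarithm absorbs the `O(C₀ log q)` cost of `x` and `⌊y⌋`
once `C ≥ 10 C₀ + O(1)`.
-/

open Real

lemma cfListAux_zero_right (fuel : ℕ) : cfListAux fuel 0 = [] := by
  cases fuel <;> simp [cfListAux]

lemma cfListAux_succ_natCast_div {b q : ℕ} (hb : 0 < b) (hq : 0 < q) (fuel : ℕ) :
    cfListAux (fuel + 1) ((b : ℚ) / q) = q / b :: cfListAux fuel (((q % b : ℕ) : ℚ) / b) := by
  have hne : (b : ℚ) / q ≠ 0 := by positivity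
  rw [cfListAux, if_neg hne, inv_div, Int.self_sub_floor, Int.fract_div_natCast_eq_div_natCast_mod,
    Rat.floor_natCast_div_natCast, ← Int.natCast_div, Int.toNat_natCast]

lemma sum_cfListAux_natCast_div_le {b q fuel : ℕ} (hb : 0 < b) (hbq : b < q) (hfuel : q ≤ fuel) :
    (cfListAux fuel ((b : ℚ) / q)).sum ≤ q := by
  induction b using Nat.strong_induction_on generalizing q fuel with
  | _ b ih =>
    obtain ⟨f, rfl⟩ : ∃ f, fuel = f + 1 := ⟨fuel - 1, by omega⟩
    rw [cfListAux_succ_natCast_div hb (by omega), List.sum_cons]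
    rcases Nat.eq_zero_or_pos (q % b) with hr | hr
    · rw [hr, Nat.cast_zero, zero_div, cfListAux_zero_right, List.sum_nil]
      exact Nat.div_le_self q b
    · have hdiv := Nat.div_add_mod q b
      have htail := ih (q % b) (Nat.mod_lt q hb) hr (Nat.mod_lt q hb) (show b ≤ f by omega)
      have hk : 1 ≤ q / b := (Nat.le_div_iff_mul_le hb).2 (by omega)
      -- `q / b + b ≤ b * (q / b) + 1 ≤ q`, as `(b - 1) * (q / b - 1) ≥ 0`
      nlinarith

lemma Rat.exists_natCast_div_den_eq {z : ℚ} (hz0 : 0 < z) (hz1 : z < 1) :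
    ∃ b : ℕ, 0 < b ∧ b < z.den ∧ b.Coprime z.den ∧ (b : ℚ) / z.den = z := by
  have hnum := Rat.num_pos.2 hz0
  have hlt := Rat.num_lt_denom_iff.2 hz1
  refine ⟨z.num.toNat, by omega, by omega, ?_, ?_⟩
  · rw [show z.num.toNat = z.num.natAbs by omega]
    exact z.reduced
  · rw [show (z.num.toNat : ℚ) = z.num by exact_mod_cast Int.toNat_of_nonneg hnum.le,
      Rat.num_div_den]

lemma S_le_den {x : ℚ} (hx0 : 0 < x) (hx1 : x < 1) : S x ≤ x.den := by
  obtain ⟨b, hb, hbq, -, hx⟩ := Rat.exists_natCast_div_den_eq hx0 hx1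
  have key := sum_cfListAux_natCast_div_le hb hbq le_rfl
  rwa [hx] at key

lemma S_half : S (1 / 2) = 2 := by
  norm_num [S, cfList, cfListAux]
  rfl

lemma one_le_S {x : ℚ} (hx0 : 0 < x) (hx1 : x < 1) : 1 ≤ S x := by
  obtain ⟨d, hd⟩ : ∃ d, x.den = d + 1 := ⟨x.den - 1, by have := x.pos; omega⟩
  have hfloor : 1 ≤ ⌊x⁻¹⌋ := Int.le_floor.2 (by exact_mod_cast (one_lt_inv₀ hx0).2 hx1 |>.le)
  rw [S, cfList, hd, cfListAux, if_neg hx0.ne', List.sum_cons]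
  omega

namespace RepCost

lemma zero : RepCost 0 0 :=
  ⟨0, Fin.elim0, Fin.elim0, fun i => i.elim0, fun i => i.elim0, by simp, by simp⟩

lemma single {x : ℚ} (hx0 : 0 < x) (hx1 : x < 1) : RepCost x (S x) :=
  ⟨1, fun _ => 1, fun _ => x, fun _ => .inl rfl, fun _ => ⟨hx0, hx1⟩, by simp, by simp⟩

lemma add {x y : ℚ} {m n : ℕ} (hx : RepCost x m) (hy : RepCost y n) : RepCost (x + y) (m + n) := by
  obtain ⟨k, ε, u, hε, hu, rfl, rfl⟩ := hx
  obtain ⟨l, δ, v, hδ, hv, rfl, rfl⟩ := hy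
  refine ⟨k + l, Fin.append ε δ, Fin.append u v, Fin.addCases ?_ ?_, Fin.addCases ?_ ?_, ?_, ?_⟩ <;>
    simp [Fin.sum_univ_add, hε, hδ, hu, hv]

lemma neg {x : ℚ} {n : ℕ} (hx : RepCost x n) : RepCost (-x) n := by
  obtain ⟨k, ε, u, hε, hu, rfl, rfl⟩ := hx
  refine ⟨k, -ε, u, fun i => ?_, hu, by simp [Finset.sum_neg_distrib], rfl⟩
  rcases hε i with h | h <;> simp [h]

lemma natCast (n : ℕ) : RepCost n (4 * n) := by
  induction n with
  | zero => exact zero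
  | succ n ih =>
    have hhalf := single (x := 1 / 2) (by norm_num) (by norm_num)
    rw [S_half] at hhalf
    convert (ih.add hhalf).add hhalf using 1
    · push_cast; ring
    · ring

lemma intCast (m : ℤ) : RepCost m (4 * m.natAbs) := by
  obtain ⟨n, rfl | rfl⟩ := Int.eq_nat_or_neg m
  · simpa using natCast n
  · simpa using (natCast n).neg

lemma abs_le {x : ℚ} {n : ℕ} (hx : RepCost x n) : |x| ≤ n := by
  obtain ⟨k, ε, u, hε, hu, rfl, rfl⟩ := hx
  push_cast
  refine (Finset.abs_sum_le_sum_abs _ _).trans (Finset.sum_le_sum fun i _ => ?_)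
  have hεi : |(ε i : ℚ)| = 1 := by rcases hε i with h | h <;> simp [h]
  rw [abs_mul, hεi, one_mul, abs_of_pos (hu i).1]
  exact (hu i).2.le.trans (by exact_mod_cast one_le_S (hu i).1 (hu i).2)

end RepCost

namespace CostLE

lemma mono {x : ℚ} {s t : ℝ} (hx : CostLE x s) (hst : s ≤ t) : CostLE x t :=
  let ⟨n, hn, hns⟩ := hx
  ⟨n, hn, hns.trans hst⟩

lemma add {x y : ℚ} {s t : ℝ} (hx : CostLE x s) (hy : CostLE y t) : CostLE (x + y) (s + t) := by
  obtain ⟨m, hm, hms⟩ := hx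
  obtain ⟨n, hn, hnt⟩ := hy
  exact ⟨m + n, hm.add hn, by push_cast; linarith⟩

lemma abs_le {x : ℚ} {t : ℝ} (hx : CostLE x t) : |(x : ℝ)| ≤ t := by
  obtain ⟨n, hn, hnt⟩ := hx
  exact (show |(x : ℝ)| ≤ n by exact_mod_cast hn.abs_le).trans hnt

end CostLE

lemma costLE_zero : CostLE 0 0 := ⟨0, RepCost.zero, by simp⟩

lemma costLE_intCast (m : ℤ) : CostLE m (4 * |(m : ℝ)|) :=
  ⟨_, RepCost.intCast m, by simp [Nat.cast_natAbs]⟩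

lemma costLE_den {x : ℚ} (hx0 : 0 < x) (hx1 : x < 1) : CostLE x x.den :=
  ⟨_, RepCost.single hx0 hx1, by exact_mod_cast S_le_den hx0 hx1⟩

/-- Writing `y = ⌊y⌋ + fract y`, the integer part costs at most `4 |⌊y⌋| ≤ 4 (s + 2)`,
since `|y| = |z - x| ≤ 1 + s`. -/
lemma CostLE.of_eq_add_fract {z x y : ℚ} {s t : ℝ} (hz : |z| ≤ 1) (hxy : z = x + y)
    (hx : CostLE x s) (hy : CostLE (Int.fract y) t) : CostLE z (5 * s + 8 + t) := by
  have hfloor : |((⌊y⌋ : ℤ) : ℝ)| ≤ s + 2 := by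
    have hle : ((⌊y⌋ : ℤ) : ℝ) ≤ y := by exact_mod_cast Int.floor_le y
    have hgt : (y : ℝ) - 1 < ⌊y⌋ := by exact_mod_cast Int.sub_one_lt_floor y
    have hzR : |(z : ℝ)| ≤ 1 := by exact_mod_cast hz
    have hyR : (y : ℝ) = z - x := by rw [hxy]; push_cast; ring
    have hxR := hx.abs_le
    rw [_root_.abs_le] at hzR hxR ⊢
    constructor <;> linarith
  have hsum : z = x + (⌊y⌋ : ℤ) + Int.fract y := by rw [add_assoc, Int.floor_add_fract, hxy]
  rw [hsum]
  exact ((hx.add (costLE_intCast ⌊y⌋)).add hy).mono (by linarith)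

lemma Rat.den_natCast_div_of_coprime {b q : ℕ} (hq : 0 < q) (h : b.Coprime q) :
    ((b : ℚ) / q).den = q := by
  have := Rat.den_div_eq_of_coprime (a := b) (b := q) (by exact_mod_cast hq) (by simpa using h)
  push_cast at this
  exact_mod_cast this

theorem costLE_mul_log_den {C₀ C : ℝ} {Q₀ : ℕ} (hbase : (Q₀ : ℝ) ≤ C * log 2)
    (hstep : 10 * C₀ * log 2 + 16 ≤ C * log 2)
    (hsplit : ∀ z : ℚ, 0 < z → z < 1 → Q₀ ≤ z.den →
      ∃ x y : ℚ, z = x + y ∧ CostLE x (C₀ * log z.den) ∧ (y.den : ℝ) < √z.den)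
    {z : ℚ} (hz0 : 0 ≤ z) (hz1 : z < 1) : CostLE z (C * log z.den) := by
  induction hq : z.den using Nat.strong_induction_on generalizing z with
  | _ q ih =>
  have hlog2 : 0 < log 2 := log_pos one_lt_two
  have hC : 0 ≤ C := by nlinarith [(Nat.cast_nonneg Q₀ : (0 : ℝ) ≤ Q₀)]
  rcases hz0.eq_or_lt with rfl | hz0
  · simpa [← hq] using costLE_zero
  have hq2 : 2 ≤ q := by
    have := Rat.num_pos.2 hz0
    have := Rat.num_lt_denom_iff.2 hz1
    omega
  have hlogq : log 2 ≤ log q := log_le_log two_pos (by exact_mod_cast hq2)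
  by_cases hQ : q < Q₀
  · refine (costLE_den hz0 hz1).mono ?_
    rw [hq]
    calc (q : ℝ) ≤ Q₀ := by exact_mod_cast hQ.le
      _ ≤ C * log 2 := hbase
      _ ≤ C * log q := by gcongr
  obtain ⟨x, y, hxy, hx, hy⟩ := hsplit z hz0 hz1 (by omega)
  rw [hq] at hx hy
  have hfract_den : ((Int.fract y).den : ℝ) ≤ √q := by rw [Rat.den_intFract]; exact hy.le
  have hfract_lt : (Int.fract y).den < q := by
    have : √(q : ℝ) < q := sqrt_lt_self_iff.2 (by exact_mod_cast hq2)
    exact_mod_cast hfract_den.trans_lt this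
  have hf : CostLE (Int.fract y) (C / 2 * log q) :=
    (ih _ hfract_lt (Int.fract_nonneg y) (Int.fract_lt_one y) rfl).mono <| calc
      C * log (Int.fract y).den ≤ C * log √q := by gcongr
      _ = C / 2 * log q := by rw [log_sqrt (Nat.cast_nonneg q)]; ring
  have hz : |z| ≤ 1 := abs_le.2 ⟨by linarith, hz1.le⟩
  exact (CostLE.of_eq_add_fract hz hxy hx hf).mono (by nlinarith)

theorem statement8_general (C₀ : ℝ) (hC₀ : 0 < C₀) (Q₀ : ℕ)
    (h : ∀ q : ℕ, Q₀ ≤ q →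
      ∀ b : ℕ, 0 < b → b < q → Nat.Coprime b q →
        ∃ x y : ℚ, (b : ℚ) / q = x + y ∧
          CostLE x (C₀ * Real.log q) ∧ (y.den : ℝ) < Real.sqrt q) :
    ∃ C : ℝ, 0 < C ∧
      ∀ b q : ℕ, 0 < b → b < q → 2 ≤ q → Nat.Coprime b q →
        CostLE ((b : ℚ) / q) (C * Real.log q) := by
  have hlog2 : 0 < log 2 := log_pos one_lt_two
  set C : ℝ := 10 * C₀ + (Q₀ + 16) / log 2 with hC
  have hClog : C * log 2 = 10 * C₀ * log 2 + Q₀ + 16 := by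
    rw [hC]; field_simp; ring
  have hsplit : ∀ z : ℚ, 0 < z → z < 1 → Q₀ ≤ z.den →
      ∃ x y : ℚ, z = x + y ∧ CostLE x (C₀ * log z.den) ∧ (y.den : ℝ) < √z.den := by
    intro z hz0 hz1 hQ
    obtain ⟨b, hb, hbq, hcop, hbz⟩ := Rat.exists_natCast_div_den_eq hz0 hz1
    simpa only [hbz] using h z.den hQ b hb hbq hcop
  refine ⟨C, by positivity, fun b q hb hbq hq2 hcop => ?_⟩
  have hz1 : (b : ℚ) / q < 1 := (div_lt_one (by positivity)).2 (by exact_mod_cast hbq)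
  have hC₀log2 : 0 < C₀ * log 2 := mul_pos hC₀ hlog2
  have hcost := costLE_mul_log_den (C := C) (by linarith) (by linarith) hsplit (by positivity) hz1
  rwa [Rat.den_natCast_div_of_coprime (by omega) hcop] at hcost

/-- the iteration step in the proof of Proposition 1. If for every
`q ≥ Q₀` and every `b ∈ ℤ_+` with `b < q`, `gcd(b,q) = 1`, one can split
`b/q = b'/q' + b''/q''` with `Ĉ(b'/q') ≤ C₀ log q` and `q'' < √q`, then there is `C > 0`
with `Ĉ(b/q) ≤ C log q` for every rational `b/q ∈ (0,1)` in lowest terms with `q ≥ 2`. -/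
theorem statement8 (C₀ : ℝ) (hC₀ : 0 < C₀) (Q₀ : ℕ) (hQ₀ : 0 < Q₀)
    (h : ∀ q : ℕ, Q₀ ≤ q →
      ∀ b : ℕ, 0 < b → b < q → Nat.Coprime b q →
        ∃ x y : ℚ, (b : ℚ) / q = x + y ∧
          CostLE x (C₀ * Real.log q) ∧ (y.den : ℝ) < Real.sqrt q) :
    ∃ C : ℝ, 0 < C ∧
      ∀ b q : ℕ, 0 < b → b < q → 2 ≤ q → Nat.Coprime b q →
        CostLE ((b : ℚ) / q) (C * Real.log q) :=
  statement8_general C₀ hC₀ Q₀ h
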